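/- For fixed positive real numbers a, b with a ≠ b, the function J(x) = C̄(x·a + (1−x)·b, x·b + (1−x)·a) is continuous and strictly increasing on the interval [1/2, 1]. -/

import Mathlib

open Real

/-- The centroidal mean of two positive reals. -/
noncomputable def centroidalMean (a b : ℝ) : ℝ := 2 * (a ^ 2 + a * b + b ^ 2) / (3 * (a + b))

/-! The two arguments of `J x` have the fixed sum `a + b` and the product `a * b + x * (1 - x) * (a - b) ^ 2`,
and the centroidal mean of a pair with fixed sum decreases as the product grows. Since `x * (1 - x)`
decreases on `[1/2, 1]`, `J` increases there. -/

theorem centroidalMean_eq (u v : ℝ) :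
    centroidalMean u v = 2 * ((u + v) ^ 2 - u * v) / (3 * (u + v)) := by
  unfold centroidalMean
  ring

theorem centroidalMean_convexComb_swap (a b x : ℝ) :
    centroidalMean (x * a + (1 - x) * b) (x * b + (1 - x) * a) =
      2 * ((a + b) ^ 2 - a * b - x * (1 - x) * (a - b) ^ 2) / (3 * (a + b)) := by
  rw [centroidalMean_eq]
  ring

theorem strictAntiOn_mul_one_sub : StrictAntiOn (fun x : ℝ => x * (1 - x)) (Set.Ici (1 / 2)) := by
  intro x hx y hy hxy
  simp only [Set.mem_Ici] at hx hy
  nlinarith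

theorem stmt_13 (a b : ℝ) (ha : 0 < a) (hb : 0 < b) (hab : a ≠ b) :
    ContinuousOn (fun x : ℝ => centroidalMean (x * a + (1 - x) * b) (x * b + (1 - x) * a))
        (Set.Icc (1 / 2 : ℝ) 1) ∧
      StrictMonoOn (fun x : ℝ => centroidalMean (x * a + (1 - x) * b) (x * b + (1 - x) * a))
        (Set.Icc (1 / 2 : ℝ) 1) := by
  have hgap : 0 < (a - b) ^ 2 := by
    have := sub_ne_zero.mpr hab
    positivity
  simp only [centroidalMean_convexComb_swap]
  refine ⟨Continuous.continuousOn (by fun_prop), fun x hx y hy hxy => ?_⟩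
  dsimp only
  gcongr 2 * (_ - ?_ * _) / _
  exact strictAntiOn_mul_one_sub hx.1 hy.1 hxy
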